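/- Let u : ℝ → ℝ be the cusped soliton: a continuous even function with u(0) = 1, 0 < u(x) < 1 for x ≠ 0, u(x) → 0 as |x| → ∞, twice continuously differentiable on ℝ \ {0}, satisfying (1 − u(x)²)·u''(x) = u(x) and u'(x)² = −log(1 − u(x)²) for all x ≠ 0. Then there exist constants K > 0 and δ ∈ (0, 1/e) such that for all x with 0 < |x| < δ, the inequality |1 − u(x) − |x|·√(log(1/|x|))| ≤ K·|x|·√(log(1/|x|))·(log(log(1/|x|))/log(1/|x|)) holds. In particular, u(x) = 1 − |x|√(log(1/|x|))·(1 + O(log log(1/|x|)/log(1/|x|))) as |x| → 0. -/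

import Mathlib

/-!
Write `v = 1 - u` and `L = -log t` for `t > 0`. Since `u'² = -log (1 - u²) > 0` off `0`, by Darboux
`u'` has one sign on `(0, ∞)`, and it is negative because `u` drops from its value `u 0 = 1`.
The first integral then reads `v' = √(-log (1 - u²))` with `v(0+) = 0`. Near `0` this speed is at
least `1`, so `v ≥ t`, hence `1 - u² ≥ v ≥ t` and `v' ≤ √L`. The barriers
`t √L + c t log L / √L` turn out to be a supersolution for `c = 1` and, using
`1 - u² ≤ 2 v ≤ 2 t L` from the first comparison, a subsolution for `c = -2`. So
`|v - t √L| ≤ 2 t log L / √L = 2 t √L (log L / L)`.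
-/

open Filter Set Real Topology

theorem Real.sqrt_sub_div_sqrt_le_sqrt_sub {a b : ℝ} (hb : 0 ≤ b) (hba : b ≤ a) :
    √a - b / √a ≤ √(a - b) :=
  calc √a - b / √a = √(a - b) * (√(a - b) / √a) := by
        rw [mul_div_assoc', mul_self_sqrt (sub_nonneg.2 hba), sub_div, div_sqrt]
    _ ≤ √(a - b) * 1 := by
        gcongr
        exact div_le_one_of_le₀ (sqrt_le_sqrt (by linarith)) (sqrt_nonneg a)
    _ = √(a - b) := mul_one _

theorem le_of_hasDerivAt_le_of_tendsto_nhdsGT {f g f' g' : ℝ → ℝ} {a b l : ℝ}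
    (hf : ∀ t ∈ Ioo a b, HasDerivAt f (f' t) t) (hg : ∀ t ∈ Ioo a b, HasDerivAt g (g' t) t)
    (hf'g' : ∀ t ∈ Ioo a b, f' t ≤ g' t)
    (hfl : Tendsto f (𝓝[>] a) (𝓝 l)) (hgl : Tendsto g (𝓝[>] a) (𝓝 l)) :
    ∀ x ∈ Ioo a b, f x ≤ g x := by
  have hderiv : ∀ t ∈ Ioo a b, HasDerivAt (fun t ↦ g t - f t) (g' t - f' t) t :=
    fun t ht ↦ (hg t ht).sub (hf t ht)
  have hmono : MonotoneOn (fun t ↦ g t - f t) (Ioo a b) := by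
    refine monotoneOn_of_hasDerivWithinAt_nonneg (f' := fun t ↦ g' t - f' t) (convex_Ioo a b)
      (fun t ht ↦ (hderiv t ht).continuousAt.continuousWithinAt) ?_ ?_ <;> rw [interior_Ioo]
    · exact fun t ht ↦ (hderiv t ht).hasDerivWithinAt
    · exact fun t ht ↦ sub_nonneg.2 (hf'g' t ht)
  intro x hx
  have hlim : Tendsto (fun t ↦ g t - f t) (𝓝[>] a) (𝓝 0) := by simpa using hgl.sub hfl
  have hle : ∀ᶠ t in 𝓝[>] a, g t - f t ≤ g x - f x := by
    filter_upwards [Ioo_mem_nhdsGT hx.1] with t ht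
    exact hmono ⟨ht.1, ht.2.trans hx.2⟩ hx ht.2.le
  exact sub_nonneg.1 (le_of_tendsto hlim hle)

theorem deriv_neg_of_deriv_ne_zero {f : ℝ → ℝ} {a b : ℝ} (hab : a < b)
    (hf : ContinuousOn f (Ici a)) (hd : ∀ x ∈ Ioi a, DifferentiableAt ℝ f x)
    (hne : ∀ x ∈ Ioi a, deriv f x ≠ 0) (hlt : f b < f a) :
    ∀ x ∈ Ioi a, deriv f x < 0 := by
  refine (hasDerivWithinAt_forall_lt_or_forall_gt_of_forall_ne (convex_Ioi a)
    (fun x hx ↦ (hd x hx).hasDerivAt.hasDerivWithinAt) hne).resolve_right fun hpos ↦ ?_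
  have hmono : StrictMonoOn f (Ici a) :=
    strictMonoOn_of_deriv_pos (convex_Ici a) hf (by rwa [interior_Ici])
  exact (hmono self_mem_Ici hab.le hab).not_gt hlt

noncomputable def cuspBarrier (c t : ℝ) : ℝ :=
  t * √(-log t) + c * (t * log (-log t) / √(-log t))

noncomputable def cuspBarrierDeriv (c t : ℝ) : ℝ :=
  √(-log t) - 1 / (2 * √(-log t)) +
    c * (log (-log t) / √(-log t) + (log (-log t) - 2) / (2 * -log t * √(-log t)))

theorem hasDerivAt_sqrt_neg_log {t : ℝ} (ht0 : 0 < t) (ht1 : t < 1) :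
    HasDerivAt (fun t ↦ √(-log t)) (-(1 / (2 * t * √(-log t)))) t := by
  have hL : 0 < -log t := neg_pos.2 (log_neg ht0 ht1)
  refine ((hasDerivAt_log ht0.ne').fun_neg.sqrt hL.ne').congr_deriv ?_
  field_simp

theorem hasDerivAt_cuspBarrier (c : ℝ) {t : ℝ} (ht0 : 0 < t) (ht1 : t < 1) :
    HasDerivAt (cuspBarrier c) (cuspBarrierDeriv c t) t := by
  have hL : 0 < -log t := neg_pos.2 (log_neg ht0 ht1)
  have hs : 0 < √(-log t) := sqrt_pos.2 hL
  have hsq : √(-log t) ^ 2 = -log t := sq_sqrt hL.le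
  have hlogL := (hasDerivAt_log ht0.ne').fun_neg.log hL.ne'
  have hsqrt := hasDerivAt_sqrt_neg_log ht0 ht1
  refine (((hasDerivAt_id' t).fun_mul hsqrt).fun_add
    ((((hasDerivAt_id' t).fun_mul hlogL).fun_div hsqrt hs.ne').const_mul c)).congr_deriv ?_
  simp only [cuspBarrierDeriv]
  set s := √(-log t)
  set m := log (-log t)
  rw [← hsq]
  field_simp
  ring

theorem tendsto_cuspBarrier_nhdsGT_zero (c : ℝ) : Tendsto (cuspBarrier c) (𝓝[>] 0) (𝓝 0) := by
  have hbound : Tendsto (fun t ↦ (1 + |c|) * -(t * log t)) (𝓝[>] 0) (𝓝 0) := by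
    simpa using ((continuous_mul_log.tendsto 0).neg.const_mul (1 + |c|)).mono_left
      nhdsWithin_le_nhds
  refine squeeze_zero_norm' ?_ hbound
  filter_upwards [Ioo_mem_nhdsGT (exp_pos (-1))] with t ⟨ht0, ht⟩
  have hL : 1 ≤ -log t := by linarith [(log_lt_iff_lt_exp ht0).2 ht]
  have hs : 1 ≤ √(-log t) := one_le_sqrt.2 hL
  have hm : 0 ≤ log (-log t) := log_nonneg hL
  have hsL : t * √(-log t) ≤ t * -log t := by gcongr; exact sqrt_le_self_iff.2 (Or.inr hL)
  have hm' : 0 ≤ t * log (-log t) / √(-log t) := by positivity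
  have hmL : t * log (-log t) / √(-log t) ≤ t * -log t :=
    calc t * log (-log t) / √(-log t) ≤ t * log (-log t) :=
          div_le_self (by positivity) hs
      _ ≤ t * -log t := by gcongr; exact log_le_self (by linarith)
  calc ‖cuspBarrier c t‖
      ≤ |t * √(-log t)| + |c| * |t * log (-log t) / √(-log t)| := by
        rw [norm_eq_abs, cuspBarrier, ← abs_mul]; exact abs_add_le _ _
    _ ≤ t * -log t + |c| * (t * -log t) := by
        rw [abs_of_nonneg (by positivity : 0 ≤ t * √(-log t)), abs_of_nonneg hm']; gcongr
    _ = (1 + |c|) * -(t * log t) := by ring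

theorem exp_two_le_neg_log {t : ℝ} (ht0 : 0 < t) (ht : t ≤ exp (-exp 2)) : exp 2 ≤ -log t := by
  linarith [(log_le_iff_le_exp ht0).2 ht]

theorem two_le_log_neg_log {t : ℝ} (ht0 : 0 < t) (ht : t ≤ exp (-exp 2)) :
    2 ≤ log (-log t) :=
  (le_log_iff_exp_le ((exp_pos 2).trans_le (exp_two_le_neg_log ht0 ht))).2
    (exp_two_le_neg_log ht0 ht)

theorem two_le_sqrt_neg_log {t : ℝ} (ht0 : 0 < t) (ht : t ≤ exp (-exp 2)) : 2 ≤ √(-log t) := by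
  have hL := exp_two_le_neg_log ht0 ht
  have h5 := quadratic_le_exp_of_nonneg zero_le_two
  rw [le_sqrt zero_le_two (by linarith)]
  linarith

theorem sqrt_neg_log_le_cuspBarrierDeriv_one {t : ℝ} (ht0 : 0 < t) (ht : t ≤ exp (-exp 2)) :
    √(-log t) ≤ cuspBarrierDeriv 1 t := by
  have hL : 0 < -log t := (exp_pos 2).trans_le (exp_two_le_neg_log ht0 ht)
  have hm := two_le_log_neg_log ht0 ht
  have hs : 0 < √(-log t) := sqrt_pos.2 hL
  have h1 : 1 / (2 * √(-log t)) ≤ log (-log t) / √(-log t) := by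
    rw [div_le_div_iff₀ (by positivity) hs]; nlinarith
  have h2 : 0 ≤ (log (-log t) - 2) / (2 * -log t * √(-log t)) :=
    div_nonneg (by linarith) (by positivity)
  simp only [cuspBarrierDeriv]
  linarith

theorem cuspBarrierDeriv_neg_two_le {t : ℝ} (ht0 : 0 < t) (ht : t ≤ exp (-exp 2)) :
    cuspBarrierDeriv (-2) t ≤ √(-log t) - (log (-log t) + log 2) / √(-log t) := by
  have hL : 0 < -log t := (exp_pos 2).trans_le (exp_two_le_neg_log ht0 ht)
  have hm := two_le_log_neg_log ht0 ht
  have hs : 0 < √(-log t) := sqrt_pos.2 hL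
  have h1 : (log (-log t) + log 2) / √(-log t) ≤
      1 / (2 * √(-log t)) + 2 * (log (-log t) / √(-log t)) := by
    rw [show 1 / (2 * √(-log t)) + 2 * (log (-log t) / √(-log t)) =
      (1 / 2 + 2 * log (-log t)) / √(-log t) by field_simp]
    exact div_le_div_of_nonneg_right (by linarith [log_two_lt_d9]) hs.le
  have h2 : 0 ≤ (log (-log t) - 2) / (2 * -log t * √(-log t)) :=
    div_nonneg (by linarith) (by positivity)
  simp only [cuspBarrierDeriv]
  linarith

theorem cuspBarrier_one_le_mul_neg_log {t : ℝ} (ht0 : 0 < t) (ht : t ≤ exp (-exp 2)) :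
    cuspBarrier 1 t ≤ t * -log t := by
  have hL := exp_two_le_neg_log ht0 ht
  have h5 := quadratic_le_exp_of_nonneg zero_le_two
  have hs := two_le_sqrt_neg_log ht0 ht
  have hsq : √(-log t) ^ 2 = -log t := sq_sqrt (by linarith)
  have hm : log (-log t) ≤ -log t - 1 := log_le_sub_one_of_pos (by linarith)
  have hms : log (-log t) / √(-log t) ≤ (-log t - 1) / 2 :=
    div_le_div₀ (by linarith) hm zero_lt_two hs
  have hsL : √(-log t) ≤ -log t / 2 := by nlinarith
  calc cuspBarrier 1 t = t * (√(-log t) + log (-log t) / √(-log t)) := by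
        rw [cuspBarrier]; ring
    _ ≤ t * (-log t / 2 + (-log t - 1) / 2) := by gcongr
    _ ≤ t * -log t := by nlinarith

theorem hasDerivAt_neg_sqrt_of_deriv_sq_eq {u : ℝ → ℝ} (hcont : ContinuousOn u (Ici 0))
    (h0 : u 0 = 1) (hrange : ∀ x ∈ Ioi (0 : ℝ), 0 < u x ∧ u x < 1)
    (hdiff : ∀ x ∈ Ioi (0 : ℝ), DifferentiableAt ℝ u x)
    (hinv : ∀ x ∈ Ioi (0 : ℝ), deriv u x ^ 2 = -log (1 - u x ^ 2)) :
    ∀ t ∈ Ioi (0 : ℝ), HasDerivAt u (-√(-log (1 - u t ^ 2))) t := by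
  have hderiv_neg : ∀ x ∈ Ioi (0 : ℝ), deriv u x < 0 := by
    refine deriv_neg_of_deriv_ne_zero one_pos hcont hdiff (fun x hx hzero ↦ ?_)
      (h0 ▸ (hrange 1 (mem_Ioi.2 one_pos)).2)
    obtain ⟨hux0, hux1⟩ := hrange x hx
    have hlog := hinv x hx
    rw [hzero] at hlog
    linarith [log_neg (by nlinarith : 0 < 1 - u x ^ 2) (by nlinarith)]
  intro t ht
  rw [← hinv t ht, sqrt_sq_eq_abs, abs_of_neg (hderiv_neg t ht), neg_neg]
  exact (hdiff t ht).hasDerivAt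

section CuspProfile

variable {u : ℝ → ℝ} {δ : ℝ}

theorem hasDerivAt_one_sub {t : ℝ} (hu : HasDerivAt u (-√(-log (1 - u t ^ 2))) t) :
    HasDerivAt (fun t ↦ 1 - u t) (√(-log (1 - u t ^ 2))) t := by
  simpa using hu.const_sub 1

theorem le_one_sub_of_hasDerivAt
    (hu : ∀ t ∈ Ioo 0 δ, HasDerivAt u (-√(-log (1 - u t ^ 2))) t)
    (hu1 : Tendsto u (𝓝[>] 0) (𝓝 1)) (hrange : ∀ t ∈ Ioo 0 δ, 0 < u t ∧ u t < 1)
    (hsmall : ∀ t ∈ Ioo 0 δ, 1 - u t ^ 2 ≤ exp (-1)) :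
    ∀ t ∈ Ioo 0 δ, t ≤ 1 - u t := by
  refine le_of_hasDerivAt_le_of_tendsto_nhdsGT (f' := fun _ ↦ 1)
    (fun t _ ↦ hasDerivAt_id' t) (fun t ht ↦ hasDerivAt_one_sub (hu t ht)) (fun t ht ↦ ?_)
    (tendsto_id.mono_left nhdsWithin_le_nhds) (by simpa using hu1.const_sub 1)
  obtain ⟨hut0, hut1⟩ := hrange t ht
  have hlog := (log_le_iff_le_exp (by nlinarith)).2 (hsmall t ht)
  exact one_le_sqrt.2 (by linarith)

theorem one_sub_le_cuspBarrier_one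
    (hu : ∀ t ∈ Ioo 0 δ, HasDerivAt u (-√(-log (1 - u t ^ 2))) t)
    (hu1 : Tendsto u (𝓝[>] 0) (𝓝 1)) (hrange : ∀ t ∈ Ioo 0 δ, 0 < u t ∧ u t < 1)
    (hsmall : ∀ t ∈ Ioo 0 δ, 1 - u t ^ 2 ≤ exp (-1)) (hδ : δ ≤ exp (-exp 2)) :
    ∀ t ∈ Ioo 0 δ, 1 - u t ≤ cuspBarrier 1 t := by
  have htδ : ∀ t ∈ Ioo 0 δ, t ≤ exp (-exp 2) := fun t ht ↦ ht.2.le.trans hδ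
  have hlt_one : ∀ t ∈ Ioo 0 δ, t < 1 := fun t ht ↦
    (htδ t ht).trans_lt (exp_lt_one_iff.2 (neg_neg_of_pos (exp_pos 2)))
  refine le_of_hasDerivAt_le_of_tendsto_nhdsGT (fun t ht ↦ hasDerivAt_one_sub (hu t ht))
    (fun t ht ↦ hasDerivAt_cuspBarrier 1 ht.1 (hlt_one t ht)) (fun t ht ↦ ?_)
    (by simpa using hu1.const_sub 1) (tendsto_cuspBarrier_nhdsGT_zero 1)
  obtain ⟨hut0, hut1⟩ := hrange t ht
  have ht_le : t ≤ 1 - u t ^ 2 := by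
    nlinarith [le_one_sub_of_hasDerivAt hu hu1 hrange hsmall t ht]
  calc √(-log (1 - u t ^ 2)) ≤ √(-log t) := by
        exact sqrt_le_sqrt (by linarith [log_le_log ht.1 ht_le])
    _ ≤ cuspBarrierDeriv 1 t := sqrt_neg_log_le_cuspBarrierDeriv_one ht.1 (htδ t ht)

theorem cuspBarrier_neg_two_le_one_sub
    (hu : ∀ t ∈ Ioo 0 δ, HasDerivAt u (-√(-log (1 - u t ^ 2))) t)
    (hu1 : Tendsto u (𝓝[>] 0) (𝓝 1)) (hrange : ∀ t ∈ Ioo 0 δ, 0 < u t ∧ u t < 1)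
    (hsmall : ∀ t ∈ Ioo 0 δ, 1 - u t ^ 2 ≤ exp (-1)) (hδ : δ ≤ exp (-exp 2)) :
    ∀ t ∈ Ioo 0 δ, cuspBarrier (-2) t ≤ 1 - u t := by
  have htδ : ∀ t ∈ Ioo 0 δ, t ≤ exp (-exp 2) := fun t ht ↦ ht.2.le.trans hδ
  have hlt_one : ∀ t ∈ Ioo 0 δ, t < 1 := fun t ht ↦
    (htδ t ht).trans_lt (exp_lt_one_iff.2 (neg_neg_of_pos (exp_pos 2)))
  refine le_of_hasDerivAt_le_of_tendsto_nhdsGT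
    (fun t ht ↦ hasDerivAt_cuspBarrier (-2) ht.1 (hlt_one t ht))
    (fun t ht ↦ hasDerivAt_one_sub (hu t ht)) (fun t ht ↦ ?_)
    (tendsto_cuspBarrier_nhdsGT_zero (-2)) (by simpa using hu1.const_sub 1)
  obtain ⟨hut0, hut1⟩ := hrange t ht
  have hL := exp_two_le_neg_log ht.1 (htδ t ht)
  have hL0 : 0 < -log t := (exp_pos 2).trans_le hL
  have hm := two_le_log_neg_log ht.1 (htδ t ht)
  have hpos : 0 < 1 - u t ^ 2 := by nlinarith
  have hle : 1 - u t ^ 2 ≤ 2 * t * -log t := by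
    nlinarith [one_sub_le_cuspBarrier_one hu hu1 hrange hsmall hδ t ht,
      cuspBarrier_one_le_mul_neg_log ht.1 (htδ t ht)]
  have hlog : log (1 - u t ^ 2) ≤ log 2 + log t + log (-log t) :=
    calc log (1 - u t ^ 2) ≤ log (2 * t * -log t) := log_le_log hpos hle
      _ = log 2 + log t + log (-log t) := by
        rw [log_mul (mul_pos two_pos ht.1).ne' hL0.ne', log_mul two_ne_zero ht.1.ne']
  have hb : log (-log t) + log 2 ≤ -log t := by
    linarith [log_le_sub_one_of_pos hL0, log_two_lt_d9]
  calc cuspBarrierDeriv (-2) t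
      ≤ √(-log t) - (log (-log t) + log 2) / √(-log t) :=
        cuspBarrierDeriv_neg_two_le ht.1 (htδ t ht)
    _ ≤ √(-log t - (log (-log t) + log 2)) :=
        sqrt_sub_div_sqrt_le_sqrt_sub (by linarith [log_pos one_lt_two]) hb
    _ ≤ √(-log (1 - u t ^ 2)) := sqrt_le_sqrt (by linarith)

theorem abs_one_sub_sub_le
    (hu : ∀ t ∈ Ioo 0 δ, HasDerivAt u (-√(-log (1 - u t ^ 2))) t)
    (hu1 : Tendsto u (𝓝[>] 0) (𝓝 1)) (hrange : ∀ t ∈ Ioo 0 δ, 0 < u t ∧ u t < 1)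
    (hsmall : ∀ t ∈ Ioo 0 δ, 1 - u t ^ 2 ≤ exp (-1)) (hδ : δ ≤ exp (-exp 2)) :
    ∀ t ∈ Ioo 0 δ, |1 - u t - t * √(-log t)| ≤
      2 * t * √(-log t) * (log (-log t) / -log t) := by
  intro t ht
  have hupper := one_sub_le_cuspBarrier_one hu hu1 hrange hsmall hδ t ht
  have hlower := cuspBarrier_neg_two_le_one_sub hu hu1 hrange hsmall hδ t ht
  have htδ : t ≤ exp (-exp 2) := ht.2.le.trans hδ
  have hL : 0 < -log t := (exp_pos 2).trans_le (exp_two_le_neg_log ht.1 htδ)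
  have hm := two_le_log_neg_log ht.1 htδ
  have hsq : √(-log t) ^ 2 = -log t := sq_sqrt hL.le
  have hs : 0 < √(-log t) := sqrt_pos.2 hL
  have herr : 0 ≤ t * log (-log t) / √(-log t) := div_nonneg (by nlinarith [ht.1]) hs.le
  have hrhs : 2 * t * √(-log t) * (log (-log t) / -log t) =
      2 * (t * log (-log t) / √(-log t)) := by
    set s := √(-log t)
    set m := log (-log t)
    rw [← hsq]; field_simp
  rw [cuspBarrier] at hupper hlower
  rw [abs_le, hrhs]
  constructor <;> linarith

end CuspProfile

theorem cusped_soliton_asymptotics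
    (u : ℝ → ℝ)
    (hcont : Continuous u)
    (heven : ∀ x : ℝ, u (-x) = u x)
    (h0 : u 0 = 1)
    (hrange : ∀ x : ℝ, x ≠ 0 → 0 < u x ∧ u x < 1)
    (hsmooth : ContDiffOn ℝ 2 u {(0 : ℝ)}ᶜ)
    (hinv : ∀ x : ℝ, x ≠ 0 → (deriv u x) ^ 2 = -Real.log (1 - u x ^ 2)) :
    ∃ K : ℝ, 0 < K ∧ ∃ δ : ℝ, δ ∈ Ioo (0 : ℝ) (1 / Real.exp 1) ∧
      ∀ x : ℝ, 0 < |x| → |x| < δ →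
        |1 - u x - |x| * Real.sqrt (Real.log (1 / |x|))| ≤
          K * |x| * Real.sqrt (Real.log (1 / |x|)) *
            (Real.log (Real.log (1 / |x|)) / Real.log (1 / |x|)) := by
  have hu := hasDerivAt_neg_sqrt_of_deriv_sq_eq hcont.continuousOn h0
    (fun x hx ↦ hrange x (ne_of_gt hx)) (fun x hx ↦ (hsmooth.contDiffAt
      (isOpen_compl_singleton.mem_nhds (ne_of_gt hx))).differentiableAt two_ne_zero)
    (fun x hx ↦ hinv x (ne_of_gt hx))
  have hu1 : Tendsto u (𝓝[>] 0) (𝓝 1) := h0 ▸ hcont.continuousWithinAt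
  obtain ⟨δ, hδ, hsmall⟩ : ∃ δ ∈ Ioi (0 : ℝ), Ioo 0 δ ⊆ {t | 1 - u t ^ 2 < exp (-1)} := by
    refine mem_nhdsGT_iff_exists_Ioo_subset.1 (Tendsto.eventually_lt_const (exp_pos (-1)) ?_)
    simpa using (hu1.pow 2).const_sub 1
  set δ' := min δ (exp (-exp 2))
  have hδ' : δ' < 1 / exp 1 := by
    rw [one_div, ← exp_neg]
    exact (min_le_right _ _).trans_lt (exp_lt_exp.2 (by linarith [add_one_le_exp 2]))
  refine ⟨2, two_pos, δ', ⟨lt_min hδ (exp_pos _), hδ'⟩, fun x hx0 hxδ ↦ ?_⟩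
  have hux : u |x| = u x := by rcases abs_choice x with h | h <;> rw [h]; exact heven x
  rw [one_div, log_inv, ← hux]
  exact abs_one_sub_sub_le (fun t ht ↦ hu t ht.1) hu1 (fun t ht ↦ hrange t ht.1.ne')
    (fun t ht ↦ (hsmall ⟨ht.1, ht.2.trans_le (min_le_left _ _)⟩).le) (min_le_right _ _)
    |x| ⟨hx0, hxδ⟩
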